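/- Let D be the trapezoidal fuzzy variable (r1,r2,r3,r4) with 0 < r1 < r2 ≤ r3 < r4 and let λ ∈ [0,1]. Then E_λ(1/D) = ∫_0^∞ m_λ(D ≤ 1/r) dr = (λ/(r2 − r1))·ln(r2/r1) + ((1 − λ)/(r4 − r3))·ln(r4/r3). -/

import Mathlib

open MeasureTheory Set

/-- Possibility measure of an event `A` built from membership function `μ`
(with the convention `sSup ∅ = 0`, which holds for `Real.sSup`). -/
noncomputable def Pos (μ : ℝ → ℝ) (A : Set ℝ) : ℝ := sSup (μ '' A)

/-- Necessity measure associated with `μ`. -/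
noncomputable def Nec (μ : ℝ → ℝ) (A : Set ℝ) : ℝ := 1 - Pos μ Aᶜ

/-- The parametric measure `m_λ(A) = λ·Pos(A) + (1−λ)·Nec(A)`. -/
noncomputable def mMeas (l : ℝ) (μ : ℝ → ℝ) (A : Set ℝ) : ℝ :=
  l * Pos μ A + (1 - l) * Nec μ A

/-- The `m_λ`-expected value of the fuzzy variable with membership function `μ`:
`E_λ(ξ) = ∫_{−∞}^0 (m_λ([r,∞)) − 1) dr + ∫_0^∞ m_λ([r,∞)) dr`. -/
noncomputable def Eexp (l : ℝ) (μ : ℝ → ℝ) : ℝ :=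
  (∫ r in Set.Iic (0:ℝ), (mMeas l μ (Set.Ici r) - 1)) +
  (∫ r in Set.Ioi (0:ℝ), mMeas l μ (Set.Ici r))

/-- Membership function of the trapezoidal fuzzy variable `(r1,r2,r3,r4)`. -/
noncomputable def trapMF (r1 r2 r3 r4 : ℝ) : ℝ → ℝ := fun x =>
  if r1 ≤ x ∧ x ≤ r2 then (x - r1) / (r2 - r1)
  else if r2 ≤ x ∧ x ≤ r3 then 1
  else if r3 ≤ x ∧ x ≤ r4 then (r4 - x) / (r4 - r3)
  else 0

/-- Membership function of the triangular fuzzy variable `(r1,r2,r4)`. -/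
noncomputable def triMF (r1 r2 r4 : ℝ) : ℝ → ℝ := fun x =>
  if r1 ≤ x ∧ x ≤ r2 then (x - r1) / (r2 - r1)
  else if r2 ≤ x ∧ x ≤ r4 then (r4 - x) / (r4 - r2)
  else 0

/-- Membership function of the trapezoidal fuzzy variable `(a−α, a, b, b+β)`. -/
noncomputable def trapMF2 (a b α β : ℝ) : ℝ → ℝ := fun x =>
  if a - α ≤ x ∧ x ≤ a then 1 - (a - x) / α
  else if a ≤ x ∧ x ≤ b then 1
  else if b ≤ x ∧ x ≤ b + β then 1 - (x - b) / β
  else 0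

/-- Membership function of the triangular fuzzy variable `(a−α, a, a+β)`. -/
noncomputable def triMF2 (a α β : ℝ) : ℝ → ℝ := fun x =>
  if a - α ≤ x ∧ x ≤ a then 1 - (a - x) / α
  else if a ≤ x ∧ x ≤ a + β then 1 - (x - a) / β
  else 0


/-!
The trapezoidal membership function is the minimum of the rising ramp from `r1` to `r2` and of
one minus the rising ramp from `r3` to `r4`. Taking suprema of this minimum over `x ≤ t` and over
`x > t` (the latter by continuity, through `x ≥ t`), `Pos (D ≤ t)` is the first ramp at `t` and
`Nec (D ≤ t)` the second, so `m_λ (D ≤ 1/r)` is `λ` times the first ramp at `1/r` plus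
`1 - λ` times the second. For `0 < a < b` the ramp from `a` to `b` at `1/r` equals `1` on `(0, 1/b]`,
`(1/r - a) / (b - a)` on `[1/b, 1/a]` and `0` beyond, so its integral over `r > 0` is
`1/b + (log (b/a) - 1 + a/b) / (b - a) = log (b/a) / (b - a)`.
-/

noncomputable def ramp (a b t : ℝ) : ℝ := (max a (min b t) - a) / (b - a)

section ramp

variable {a b : ℝ}

theorem ramp_of_le {t : ℝ} (ht : t ≤ a) : ramp a b t = 0 := by
  rw [ramp, max_eq_left ((min_le_right b t).trans ht), sub_self, zero_div]

theorem ramp_of_ge (hab : a < b) {t : ℝ} (ht : b ≤ t) : ramp a b t = 1 := by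
  rw [ramp, min_eq_left ht, max_eq_right hab.le, div_self (sub_ne_zero.2 hab.ne')]

theorem ramp_of_mem_Icc {t : ℝ} (ht : t ∈ Icc a b) : ramp a b t = (t - a) / (b - a) := by
  rw [ramp, min_eq_right ht.2, max_eq_right ht.1]

theorem ramp_mem_Icc (t : ℝ) : ramp a b t ∈ Icc 0 1 := by
  rcases le_or_gt b a with hba | hab
  · rw [ramp, max_eq_left ((min_le_left b t).trans hba), sub_self, zero_div]
    exact ⟨le_rfl, zero_le_one⟩
  · have hba : 0 < b - a := sub_pos.2 hab
    refine ⟨div_nonneg (sub_nonneg.2 (le_max_left _ _)) hba.le, (div_le_one hba).2 ?_⟩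
    linarith [max_le hab.le (min_le_left b t)]

theorem ramp_min_right (hab : a < b) (t : ℝ) : ramp a b (min t b) = ramp a b t := by
  rcases le_total t b with h | h
  · rw [min_eq_left h]
  · rw [min_eq_right h, ramp_of_ge hab le_rfl, ramp_of_ge hab h]

theorem ramp_max_left (t : ℝ) : ramp a b (max t a) = ramp a b t := by
  rcases le_total t a with h | h
  · rw [max_eq_right h, ramp_of_le le_rfl, ramp_of_le h]
  · rw [max_eq_left h]

theorem monotone_ramp (hab : a ≤ b) : Monotone (ramp a b) := fun _ _ hst =>
  div_le_div_of_nonneg_right (by gcongr) (sub_nonneg.2 hab)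

theorem continuous_ramp : Continuous (ramp a b) := by
  unfold ramp
  fun_prop

end ramp

theorem pos_Ioi_eq_of_isGreatest_Ici {μ : ℝ → ℝ} (hμ : Continuous μ) {t c : ℝ}
    (h : IsGreatest (μ '' Ici t) c) : Pos μ (Ioi t) = c := by
  have hub : c ∈ upperBounds (μ '' Ioi t) :=
    upperBounds_mono_set (image_mono Ioi_subset_Ici_self) h.2
  have hcl : c ∈ closure (μ '' Ioi t) := by
    apply image_closure_subset_closure_image hμ
    rw [closure_Ioi]
    exact h.1
  exact (isLUB_of_mem_closure hub hcl).csSup_eq (nonempty_Ioi.image μ)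

section trapezoid

variable {r1 r2 r3 r4 : ℝ}

theorem trapMF_eq_min_ramp (h12 : r1 < r2) (h23 : r2 ≤ r3) (h34 : r3 < r4) (x : ℝ) :
    trapMF r1 r2 r3 r4 x = min (ramp r1 r2 x) (1 - ramp r3 r4 x) := by
  unfold trapMF
  split_ifs with h1 h2 h3
  · rw [ramp_of_le (h1.2.trans h23), sub_zero, min_eq_left (ramp_mem_Icc x).2, ramp_of_mem_Icc h1]
  · rw [ramp_of_ge h12 h2.1, ramp_of_le h2.2]
    norm_num
  · have hr4 : r4 - r3 ≠ 0 := sub_ne_zero.2 h34.ne'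
    rw [ramp_of_ge h12 (h23.trans h3.1), ramp_of_mem_Icc h3,
      min_eq_right (sub_le_self _ (div_nonneg (by linarith [h3.1]) (by linarith)))]
    field_simp
    ring
  · rcases lt_or_ge x r1 with hx | hx
    · rw [ramp_of_le hx.le, ramp_of_le (by linarith)]
      norm_num
    · have hx4 : r4 < x := by grind
      rw [ramp_of_ge h12 (by linarith), ramp_of_ge h34 hx4.le]
      norm_num

theorem continuous_trapMF (h12 : r1 < r2) (h23 : r2 ≤ r3) (h34 : r3 < r4) :
    Continuous (trapMF r1 r2 r3 r4) :=
  (continuous_ramp.min (continuous_const.sub continuous_ramp)).congr fun x =>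
    (trapMF_eq_min_ramp h12 h23 h34 x).symm

theorem pos_trapMF_Iic (h12 : r1 < r2) (h23 : r2 ≤ r3) (h34 : r3 < r4) (t : ℝ) :
    Pos (trapMF r1 r2 r3 r4) (Iic t) = ramp r1 r2 t := by
  refine IsGreatest.csSup_eq ⟨⟨min t r2, mem_Iic.2 (min_le_left _ _), ?_⟩, ?_⟩
  · rw [trapMF_eq_min_ramp h12 h23 h34, ramp_of_le ((min_le_right _ _).trans h23), sub_zero,
      min_eq_left (ramp_mem_Icc _).2, ramp_min_right h12]
  · rintro _ ⟨x, hx, rfl⟩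
    exact (trapMF_eq_min_ramp h12 h23 h34 x).trans_le
      ((min_le_left _ _).trans (monotone_ramp h12.le hx))

theorem pos_trapMF_Ioi (h12 : r1 < r2) (h23 : r2 ≤ r3) (h34 : r3 < r4) (t : ℝ) :
    Pos (trapMF r1 r2 r3 r4) (Ioi t) = 1 - ramp r3 r4 t := by
  refine pos_Ioi_eq_of_isGreatest_Ici (continuous_trapMF h12 h23 h34)
    ⟨⟨max t r3, mem_Ici.2 (le_max_left _ _), ?_⟩, ?_⟩
  · rw [trapMF_eq_min_ramp h12 h23 h34, ramp_of_ge h12 (h23.trans (le_max_right _ _)),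
      min_eq_right (sub_le_self _ (ramp_mem_Icc _).1), ramp_max_left]
  · rintro _ ⟨x, hx, rfl⟩
    exact (trapMF_eq_min_ramp h12 h23 h34 x).trans_le
      ((min_le_right _ _).trans (sub_le_sub_left (monotone_ramp h34.le hx) 1))

theorem mMeas_trapMF_Iic (h12 : r1 < r2) (h23 : r2 ≤ r3) (h34 : r3 < r4) (l t : ℝ) :
    mMeas l (trapMF r1 r2 r3 r4) (Iic t) = l * ramp r1 r2 t + (1 - l) * ramp r3 r4 t := by
  rw [mMeas, Nec, compl_Iic, pos_trapMF_Iic h12 h23 h34, pos_trapMF_Ioi h12 h23 h34,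
    sub_sub_cancel]

end trapezoid

section integral

variable {a b : ℝ}

theorem integrableOn_ramp_one_div {s : Set ℝ} (hs : volume s ≠ ⊤) :
    IntegrableOn (fun r => ramp a b (1 / r)) s := by
  refine Measure.integrableOn_of_bounded hs ?_ (M := 1) (ae_of_all _ fun _ => ?_)
  · exact (continuous_ramp.measurable.comp (measurable_const.div measurable_id))
      |>.aestronglyMeasurable
  · rw [Real.norm_eq_abs, abs_of_nonneg (ramp_mem_Icc _).1]
    exact (ramp_mem_Icc _).2

theorem ramp_one_div_of_ge (ha : 0 < a) {r : ℝ} (hr : 1 / a ≤ r) : ramp a b (1 / r) = 0 :=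
  ramp_of_le ((one_div_le ((one_div_pos.2 ha).trans_le hr) ha).2 hr)

theorem integrableOn_Ioi_ramp_one_div (ha : 0 < a) :
    IntegrableOn (fun r => ramp a b (1 / r)) (Ioi 0) :=
  (integrableOn_ramp_one_div measure_Ioc_lt_top.ne).of_forall_sdiff_eq_zero measurableSet_Ioi
    fun _ hr => ramp_one_div_of_ge ha (le_of_not_ge fun h => hr.2 ⟨hr.1, h⟩)

theorem integral_Ioi_ramp_one_div (ha : 0 < a) (hab : a < b) :
    ∫ r in Ioi 0, ramp a b (1 / r) = Real.log (b / a) / (b - a) := by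
  have hb : 0 < b := ha.trans hab
  have hb0 : 0 < 1 / b := one_div_pos.2 hb
  have hba : 1 / b ≤ 1 / a := one_div_le_one_div_of_le ha hab.le
  have hint {c d : ℝ} : IntervalIntegrable (fun r => ramp a b (1 / r)) volume c d :=
    (integrableOn_ramp_one_div measure_Icc_lt_top.ne).intervalIntegrable
  have head : ∫ r in 0..1 / b, ramp a b (1 / r) = 1 / b := by
    rw [intervalIntegral.integral_congr_ae (g := fun _ => 1) (ae_of_all _ fun r hr => ?_)]
    · simp
    rw [uIoc_of_le hb0.le] at hr
    exact ramp_of_ge hab ((le_one_div hr.1 hb).1 hr.2)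
  have middle : ∫ r in 1 / b..1 / a, ramp a b (1 / r) =
      (Real.log (b / a) - a * (1 / a - 1 / b)) / (b - a) := by
    rw [intervalIntegral.integral_congr (g := fun r => (1 / r - a) / (b - a)) fun r hr => ?_]
    · have h0 : (0 : ℝ) ∉ uIcc (1 / b) (1 / a) := by
        rw [uIcc_of_le hba]
        exact fun h => hb0.not_ge h.1
      rw [intervalIntegral.integral_div, intervalIntegral.integral_sub
          (intervalIntegral.intervalIntegrable_one_div (fun x hx => ne_of_mem_of_not_mem hx h0)
            continuousOn_id) intervalIntegrable_const,
        integral_one_div h0, intervalIntegral.integral_const, smul_eq_mul,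
        show 1 / a / (1 / b) = b / a by field_simp]
      ring
    rw [uIcc_of_le hba] at hr
    have hr0 : 0 < r := hb0.trans_le hr.1
    exact ramp_of_mem_Icc ⟨(le_one_div ha hr0).2 hr.2, (one_div_le hr0 hb).2 hr.1⟩
  calc ∫ r in Ioi 0, ramp a b (1 / r) = ∫ r in Ioc 0 (1 / a), ramp a b (1 / r) :=
        setIntegral_eq_of_subset_of_forall_sdiff_eq_zero measurableSet_Ioi Ioc_subset_Ioi_self
          fun _ hr => ramp_one_div_of_ge ha (le_of_not_ge fun h => hr.2 ⟨hr.1, h⟩)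
    _ = ∫ r in 0..1 / a, ramp a b (1 / r) :=
        (intervalIntegral.integral_of_le (hb0.le.trans hba)).symm
    _ = (∫ r in 0..1 / b, ramp a b (1 / r)) + ∫ r in 1 / b..1 / a, ramp a b (1 / r) :=
        (intervalIntegral.integral_add_adjacent_intervals hint hint).symm
    _ = Real.log (b / a) / (b - a) := by
      rw [head, middle]
      field_simp [hb.ne', sub_ne_zero.2 hab.ne']
      ring

end integral

theorem stmt_6_general (r1 r2 r3 r4 l : ℝ)
    (h0 : 0 < r1) (h12 : r1 < r2) (h23 : r2 ≤ r3) (h34 : r3 < r4) :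
    (∫ r in Set.Ioi (0:ℝ), mMeas l (trapMF r1 r2 r3 r4) (Set.Iic (1 / r))) =
      l / (r2 - r1) * Real.log (r2 / r1) + (1 - l) / (r4 - r3) * Real.log (r4 / r3) := by
  have h03 : 0 < r3 := by linarith
  simp_rw [mMeas_trapMF_Iic h12 h23 h34]
  rw [integral_add ((integrableOn_Ioi_ramp_one_div h0).const_mul l)
      ((integrableOn_Ioi_ramp_one_div h03).const_mul (1 - l)),
    integral_const_mul, integral_const_mul, integral_Ioi_ramp_one_div h0 h12,
    integral_Ioi_ramp_one_div h03 h34]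
  ring

theorem stmt_6 (r1 r2 r3 r4 l : ℝ)
    (h0 : 0 < r1) (h12 : r1 < r2) (h23 : r2 ≤ r3) (h34 : r3 < r4)
    (hl : l ∈ Set.Icc (0:ℝ) 1) :
    (∫ r in Set.Ioi (0:ℝ), mMeas l (trapMF r1 r2 r3 r4) (Set.Iic (1 / r))) =
      l / (r2 - r1) * Real.log (r2 / r1) + (1 - l) / (r4 - r3) * Real.log (r4 / r3) :=
  stmt_6_general r1 r2 r3 r4 l h0 h12 h23 h34
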